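/- arXiv:2505.15274 — 9 statements merged into one kernel-verified Lean document; each statement's English description precedes it below -/
import Mathlib

section
/- Lower bounds for the probability of necessity and sufficiency PNS(k). The probability P(⋂_{j=1}^{k} {Y_j = j}) satisfies all of the following lower bounds: (i) P(⋂_{j=1}^{k} {Y_j = j}) ≥ 0; (ii) P(⋂_{j=1}^{k} {Y_j = j}) ≥ Σ_{j=1}^{k} P(Y_j = j) − k + 1; (iii) for every i ∈ {1,…,k}, P(⋂_{j=1}^{k} {Y_j = j}) ≥ Σ_{1 ≤ j ≤ k, j ≠ i} [ P(Y_j = j) + P(X = j) − P(X = j, Y = j) ] + P(X = i, Y = i) − k + 1. -/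
/-!
Part (ii) is the Bonferroni inequality `P(⋂ A_j) ≥ ∑ P(A_j) - #s + 1`, obtained from the union
bound applied to the complements. For (iii), apply the same inequality to the family that replaces
`{Y_i = i}` by `{X = i} ∩ {Y_i = i}` and each other `{Y_j = j}` by `{Y_j = j} ∪ {X = j}`: on the
intersection of this family `X = i`, hence `X ≠ j` and so `Y_j = j` for all `j ≠ i`. Inclusion–exclusion
gives the probabilities of the unions, and consistency identifies `{X = j} ∩ {Y_j = j}` with
`{X = j, Y = j}`.
-/

open MeasureTheory Finset

theorem biInter_update_fiber_subset {Ω ι : Type*} [DecidableEq ι] (X : Ω → ι) (A : ι → Set Ω)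
    {s : Finset ι} {i : ι} (hi : i ∈ s) :
    ⋂ j ∈ s, Function.update (fun j ↦ A j ∪ {ω | X ω = j}) i ({ω | X ω = i} ∩ A i) j ⊆
      ⋂ j ∈ s, A j := by
  intro ω hω
  obtain ⟨hXi, hAi⟩ : X ω = i ∧ ω ∈ A i := by simpa using Set.mem_iInter₂.1 hω i hi
  refine Set.mem_iInter₂.2 fun j hj ↦ ?_
  rcases eq_or_ne j i with rfl | hji
  · exact hAi
  · have hωj := Set.mem_iInter₂.1 hω j hj
    rw [Function.update_of_ne hji] at hωj
    exact hωj.resolve_right fun hXj ↦ hji (hXj.symm.trans hXi)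

section

variable {Ω ι : Type*} [MeasurableSpace Ω] {P : Measure Ω} [IsProbabilityMeasure P]

theorem sum_measureReal_sub_card_add_one_le_biInter (s : Finset ι) {A : ι → Set Ω}
    (hA : ∀ j ∈ s, NullMeasurableSet (A j) P) :
    ∑ j ∈ s, P.real (A j) - #s + 1 ≤ P.real (⋂ j ∈ s, A j) := by
  have hInter : NullMeasurableSet (⋂ j ∈ s, A j) P := .biInter s.countable_toSet hA
  have union_bound : 1 - P.real (⋂ j ∈ s, A j) ≤ #s - ∑ j ∈ s, P.real (A j) :=
    calc 1 - P.real (⋂ j ∈ s, A j)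
        = P.real (⋃ j ∈ s, (A j)ᶜ) := by
          rw [← probReal_compl_eq_one_sub₀ hInter, Set.compl_iInter₂]
      _ ≤ ∑ j ∈ s, P.real (A j)ᶜ := measureReal_biUnion_finset_le _ _
      _ = ∑ j ∈ s, (1 - P.real (A j)) :=
          sum_congr rfl fun j hj ↦ probReal_compl_eq_one_sub₀ (hA j hj)
      _ = #s - ∑ j ∈ s, P.real (A j) := by simp [sum_sub_distrib]
  linarith

theorem sum_measureReal_fiber_sub_card_add_one_le_biInter [DecidableEq ι] [MeasurableSpace ι]
    [MeasurableSingletonClass ι] {X : Ω → ι} (hX : Measurable X) {A : ι → Set Ω}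
    (hA : ∀ j, MeasurableSet (A j)) {s : Finset ι} {i : ι} (hi : i ∈ s) :
    ∑ j ∈ s.erase i, (P.real (A j) + P.real {ω | X ω = j} - P.real ({ω | X ω = j} ∩ A j))
        + P.real ({ω | X ω = i} ∩ A i) - #s + 1 ≤ P.real (⋂ j ∈ s, A j) := by
  set B := Function.update (fun j ↦ A j ∪ {ω | X ω = j}) i ({ω | X ω = i} ∩ A i)
  have hXm (j : ι) : MeasurableSet {ω | X ω = j} := hX (measurableSet_singleton j)
  have hB : ∀ j ∈ s, NullMeasurableSet (B j) P := by
    intro j _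
    rcases eq_or_ne j i with rfl | hji
    · simpa [B] using ((hXm j).inter (hA j)).nullMeasurableSet
    · simpa [B, hji] using ((hA j).union (hXm j)).nullMeasurableSet
  have hsum : ∑ j ∈ s, P.real (B j) = P.real ({ω | X ω = i} ∩ A i) +
      ∑ j ∈ s.erase i, (P.real (A j) + P.real {ω | X ω = j} - P.real ({ω | X ω = j} ∩ A j)) := by
    rw [← add_sum_erase s _ hi]
    congr 1
    · simp [B]
    · refine sum_congr rfl fun j hj ↦ ?_
      rw [show B j = A j ∪ {ω | X ω = j} from Function.update_of_ne (ne_of_mem_erase hj) _ _,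
        Set.inter_comm]
      linarith [measureReal_union_add_inter (μ := P) (s := A j) (hXm j)]
  calc _ = ∑ j ∈ s, P.real (B j) - #s + 1 := by rw [hsum]; ring
    _ ≤ P.real (⋂ j ∈ s, B j) := sum_measureReal_sub_card_add_one_le_biInter s hB
    _ ≤ P.real (⋂ j ∈ s, A j) := measureReal_mono (biInter_update_fiber_subset X A hi)

end

theorem pns_k_lower_bounds_general
    {Ω : Type*} [MeasurableSpace Ω] (P : Measure Ω) [IsProbabilityMeasure P]
    (k : ℕ)
    (X : Ω → ℕ) (Y : ℕ → Ω → ℕ) (Yobs : Ω → ℕ)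
    (hX : Measurable X) (hY : ∀ j, Measurable (Y j))
    (hcons : ∀ ω, Yobs ω = Y (X ω) ω) :
    0 ≤ (P (⋂ j ∈ Finset.Icc 1 k, {ω | Y j ω = j})).toReal ∧
    (∑ j ∈ Finset.Icc 1 k, (P {ω | Y j ω = j}).toReal) - (k : ℝ) + 1 ≤ (P (⋂ j ∈ Finset.Icc 1 k, {ω | Y j ω = j})).toReal ∧
    ∀ i ∈ Finset.Icc 1 k,
      (∑ j ∈ (Finset.Icc 1 k).erase i,
          ((P {ω | Y j ω = j}).toReal + (P {ω | X ω = j}).toReal - (P {ω | X ω = j ∧ Yobs ω = j}).toReal))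
        + (P {ω | X ω = i ∧ Yobs ω = i}).toReal - (k : ℝ) + 1 ≤ (P (⋂ j ∈ Finset.Icc 1 k, {ω | Y j ω = j})).toReal := by
  have hYm (j : ℕ) : MeasurableSet {ω | Y j ω = j} := hY j (measurableSet_singleton j)
  have hcard : (#(Icc 1 k) : ℝ) = k := by simp
  have hobs (j : ℕ) : {ω | X ω = j ∧ Yobs ω = j} = {ω | X ω = j} ∩ {ω | Y j ω = j} :=
    Set.ext fun ω ↦ and_congr_right fun hXj ↦ by rw [hcons, hXj]; rfl
  refine ⟨ENNReal.toReal_nonneg, ?_, fun i hi ↦ ?_⟩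
  · rw [← hcard]
    exact sum_measureReal_sub_card_add_one_le_biInter (Icc 1 k)
      fun j _ ↦ (hYm j).nullMeasurableSet
  · simp_rw [hobs, ← hcard]
    exact sum_measureReal_fiber_sub_card_add_one_le_biInter hX hYm hi

theorem pns_k_lower_bounds
    {Ω : Type*} [MeasurableSpace Ω] (P : Measure Ω) [IsProbabilityMeasure P]
    (n k : ℕ) (hk1 : 1 ≤ k) (hkn : k ≤ n)
    (X : Ω → ℕ) (Y : ℕ → Ω → ℕ) (Yobs : Ω → ℕ)
    (hX : Measurable X) (hY : ∀ j, Measurable (Y j))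
    (hXr : ∀ ω, X ω ∈ Finset.Icc 1 n)
    (hYr : ∀ j ω, Y j ω ∈ Finset.Icc 1 n)
    (hcons : ∀ ω, Yobs ω = Y (X ω) ω) :
    0 ≤ (P (⋂ j ∈ Finset.Icc 1 k, {ω | Y j ω = j})).toReal ∧
    (∑ j ∈ Finset.Icc 1 k, (P {ω | Y j ω = j}).toReal) - (k : ℝ) + 1 ≤ (P (⋂ j ∈ Finset.Icc 1 k, {ω | Y j ω = j})).toReal ∧
    ∀ i ∈ Finset.Icc 1 k,
      (∑ j ∈ (Finset.Icc 1 k).erase i,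
          ((P {ω | Y j ω = j}).toReal + (P {ω | X ω = j}).toReal - (P {ω | X ω = j ∧ Yobs ω = j}).toReal))
        + (P {ω | X ω = i ∧ Yobs ω = i}).toReal - (k : ℝ) + 1 ≤ (P (⋂ j ∈ Finset.Icc 1 k, {ω | Y j ω = j})).toReal :=
  pns_k_lower_bounds_general P k X Y Yobs hX hY hcons
end

section
/- Upper bounds for the probability of necessity and sufficiency PNS(k). The probability P(⋂_{j=1}^{k} {Y_j = j}) satisfies all of the following upper bounds: (i) P(⋂_{j=1}^{k} {Y_j = j}) ≤ Σ_{j=1}^{k} P(X = j, Y = j) + Σ_{j=k+1}^{n} P(X = j); (ii) for every j ∈ {1,…,k}, P(⋂_{j=1}^{k} {Y_j = j}) ≤ P(Y_j = j); (iii) for every m ∈ {1,…,k−1} and every choice of pairwise distinct indices t_0, t_1, …, t_m ∈ {1,…,k}, P(⋂_{j=1}^{k} {Y_j = j}) ≤ (1/m) · Σ_{j=0}^{m} [ P(Y_{t_j} = t_j) − P(X = t_j, Y = t_j) ]. -/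
open MeasureTheory

theorem pns_k_upper_bounds
    {Ω : Type*} [MeasurableSpace Ω] (P : Measure Ω) [IsProbabilityMeasure P]
    (n k : ℕ) (hk1 : 1 ≤ k) (hkn : k ≤ n)
    (X : Ω → ℕ) (Y : ℕ → Ω → ℕ) (Yobs : Ω → ℕ)
    (hX : Measurable X) (hY : ∀ j, Measurable (Y j))
    (hXr : ∀ ω, X ω ∈ Finset.Icc 1 n)
    (hYr : ∀ j ω, Y j ω ∈ Finset.Icc 1 n)
    (hcons : ∀ ω, Yobs ω = Y (X ω) ω) :
    (P (⋂ j ∈ Finset.Icc 1 k, {ω | Y j ω = j})).toReal ≤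
      (∑ j ∈ Finset.Icc 1 k, (P {ω | X ω = j ∧ Yobs ω = j}).toReal)
        + ∑ j ∈ Finset.Icc (k+1) n, (P {ω | X ω = j}).toReal ∧
    (∀ j ∈ Finset.Icc 1 k, (P (⋂ j ∈ Finset.Icc 1 k, {ω | Y j ω = j})).toReal ≤ (P {ω | Y j ω = j}).toReal) ∧
    ∀ m : ℕ, 1 ≤ m → m < k → ∀ t : ℕ → ℕ,
      (∀ j ∈ Finset.range (m+1), t j ∈ Finset.Icc 1 k) →
      Set.InjOn t ↑(Finset.range (m+1)) →
      (P (⋂ j ∈ Finset.Icc 1 k, {ω | Y j ω = j})).toReal ≤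
        (1 / (m : ℝ)) * ∑ j ∈ Finset.range (m+1),
          ((P {ω | Y (t j) ω = t j}).toReal - (P {ω | X ω = t j ∧ Yobs ω = t j}).toReal) := by
  classical
  set I : Set Ω := ⋂ j ∈ Finset.Icc 1 k, {ω | Y j ω = j} with hI
  have hmYj : ∀ j, MeasurableSet {ω | Y j ω = j} := fun j =>
    (hY j) (measurableSet_singleton j)
  have hmXj : ∀ j, MeasurableSet {ω | X ω = j} := fun j =>
    hX (measurableSet_singleton j)
  have hmI : MeasurableSet I := by
    apply MeasurableSet.biInter (Finset.Icc 1 k : Finset ℕ).countable_toSet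
    exact fun j _ => hmYj j
  -- rewrite the "observed" sets
  have hXYeq : ∀ s, {ω | X ω = s ∧ Yobs ω = s} = {ω | X ω = s} ∩ {ω | Y s ω = s} := by
    intro s
    ext ω
    simp only [Set.mem_setOf_eq, Set.mem_inter_iff]
    constructor
    · rintro ⟨h1, h2⟩
      refine ⟨h1, ?_⟩
      rw [hcons, h1] at h2
      exact h2
    · rintro ⟨h1, h2⟩
      refine ⟨h1, ?_⟩
      rw [hcons, h1]
      exact h2
  have hmB : ∀ s, MeasurableSet {ω | X ω = s ∧ Yobs ω = s} := by
    intro s; rw [hXYeq]; exact (hmXj s).inter (hmYj s)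
  -- I ⊆ {Y s = s} for s ∈ Icc 1 k
  have hIsub : ∀ s ∈ Finset.Icc 1 k, I ⊆ {ω | Y s ω = s} := by
    intro s hs ω hω
    exact Set.mem_iInter₂.mp hω s hs
  -- I ∩ {X = s} ⊆ {X = s ∧ Yobs = s} for s ∈ Icc 1 k
  have hsub : ∀ s ∈ Finset.Icc 1 k, I ∩ {ω | X ω = s} ⊆ {ω | X ω = s ∧ Yobs ω = s} := by
    intro s hs ω hω
    obtain ⟨hωI, hωX⟩ := hω
    refine ⟨hωX, ?_⟩
    rw [hcons, hωX]
    exact hIsub s hs hωI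
  -- decomposition of P I over values of X
  have hcover : I = ⋃ j ∈ Finset.Icc 1 n, (I ∩ {ω | X ω = j}) := by
    ext ω
    simp only [Set.mem_iUnion, Set.mem_inter_iff, Set.mem_setOf_eq, exists_prop]
    constructor
    · intro h; exact ⟨X ω, hXr ω, h, rfl⟩
    · rintro ⟨j, hj, hωI, _⟩; exact hωI
  have hdisj : (↑(Finset.Icc 1 n) : Set ℕ).PairwiseDisjoint
      fun j => I ∩ {ω | X ω = j} := by
    intro i _ j _ hij
    apply Set.disjoint_left.mpr
    rintro ω ⟨_, hi⟩ ⟨_, hj⟩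
    exact hij (hi.symm.trans hj)
  have hPI : P I = ∑ j ∈ Finset.Icc 1 n, P (I ∩ {ω | X ω = j}) := by
    conv_lhs => rw [hcover]
    exact measure_biUnion_finset hdisj fun j _ => hmI.inter (hmXj j)
  have hPIreal : (P I).toReal = ∑ j ∈ Finset.Icc 1 n, (P (I ∩ {ω | X ω = j})).toReal := by
    rw [hPI, ENNReal.toReal_sum]
    exact fun j _ => measure_ne_top P _
  refine ⟨?_, ?_, ?_⟩
  · -- part (i)
    have hsplit : ∑ j ∈ Finset.Icc 1 n, (P (I ∩ {ω | X ω = j})).toReal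
        = ∑ j ∈ Finset.Icc 1 k, (P (I ∩ {ω | X ω = j})).toReal
          + ∑ j ∈ Finset.Icc (k+1) n, (P (I ∩ {ω | X ω = j})).toReal := by
      have e1 : Finset.Icc 1 n = Finset.Ioc 0 n := Finset.Icc_add_one_left_eq_Ioc 0 n
      have e2 : Finset.Icc 1 k = Finset.Ioc 0 k := Finset.Icc_add_one_left_eq_Ioc 0 k
      have e3 : Finset.Icc (k+1) n = Finset.Ioc k n := Finset.Icc_add_one_left_eq_Ioc k n
      rw [e1, e2, e3]
      exact (Finset.sum_Ioc_consecutive _ (Nat.zero_le k) hkn).symm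
    rw [hPIreal, hsplit]
    apply add_le_add
    · exact Finset.sum_le_sum fun j hj =>
        ENNReal.toReal_mono (measure_ne_top P _) (measure_mono (hsub j hj))
    · exact Finset.sum_le_sum fun j hj =>
        ENNReal.toReal_mono (measure_ne_top P _) (measure_mono Set.inter_subset_right)
  · -- part (ii)
    intro j hj
    exact ENNReal.toReal_mono (measure_ne_top P _) (measure_mono (hIsub j hj))
  · -- part (iii)
    intro m hm1 hmk t ht htinj
    -- per-index inequality
    have hterm : ∀ s ∈ Finset.Icc 1 k,
        (P I).toReal - (P (I ∩ {ω | X ω = s})).toReal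
          ≤ (P {ω | Y s ω = s}).toReal - (P {ω | X ω = s ∧ Yobs ω = s}).toReal := by
      intro s hs
      have hsplit : (P I).toReal
          = (P (I ∩ {ω | X ω = s})).toReal + (P (I \ {ω | X ω = s})).toReal := by
        rw [← ENNReal.toReal_add (measure_ne_top P _) (measure_ne_top P _),
          measure_inter_add_diff I (hmXj s)]
      have hdisj2 : Disjoint (I \ {ω | X ω = s}) {ω | X ω = s ∧ Yobs ω = s} := by
        apply Set.disjoint_left.mpr
        rintro ω ⟨_, hω⟩ ⟨hω', _⟩
        exact hω hω'
      have hun : P (I \ {ω | X ω = s}) + P {ω | X ω = s ∧ Yobs ω = s}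
          ≤ P {ω | Y s ω = s} := by
        rw [← measure_union hdisj2 (hmB s)]
        apply measure_mono
        apply Set.union_subset
        · exact fun ω hω => hIsub s hs hω.1
        · intro ω hω
          have := hcons ω
          rw [hω.1] at this
          exact this.symm.trans hω.2
      have hun' : (P (I \ {ω | X ω = s})).toReal + (P {ω | X ω = s ∧ Yobs ω = s}).toReal
          ≤ (P {ω | Y s ω = s}).toReal := by
        rw [← ENNReal.toReal_add (measure_ne_top P _) (measure_ne_top P _)]
        exact ENNReal.toReal_mono (measure_ne_top P _) hun
      linarith
    -- sum over j
    have hsum : (m + 1 : ℝ) * (P I).toReal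
        - ∑ j ∈ Finset.range (m+1), (P (I ∩ {ω | X ω = t j})).toReal
        ≤ ∑ j ∈ Finset.range (m+1),
          ((P {ω | Y (t j) ω = t j}).toReal - (P {ω | X ω = t j ∧ Yobs ω = t j}).toReal) := by
      have := Finset.sum_le_sum (fun j hj => hterm (t j) (ht j hj))
      simp only [Finset.sum_sub_distrib, Finset.sum_const, Finset.card_range,
        nsmul_eq_mul] at this ⊢
      push_cast at this ⊢
      linarith
    -- the sum of the intersection masses is at most (P I).toReal
    have himg : ∑ j ∈ Finset.range (m+1), (P (I ∩ {ω | X ω = t j})).toReal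
        ≤ (P I).toReal := by
      have heq : ∑ j ∈ Finset.range (m+1), (P (I ∩ {ω | X ω = t j})).toReal
          = ∑ s ∈ (Finset.range (m+1)).image t, (P (I ∩ {ω | X ω = s})).toReal := by
        rw [Finset.sum_image]
        intro x hx y hy hxy
        exact htinj hx hy hxy
      rw [heq, hPIreal]
      apply Finset.sum_le_sum_of_subset_of_nonneg
      · intro s hs
        obtain ⟨j, hj, rfl⟩ := Finset.mem_image.mp hs
        have := ht j hj
        simp only [Finset.mem_Icc] at this ⊢
        exact ⟨this.1, this.2.trans hkn⟩
      · exact fun _ _ _ => ENNReal.toReal_nonneg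
    have hmpos : (0 : ℝ) < (m : ℝ) := by exact_mod_cast hm1
    rw [div_mul_eq_mul_div, one_mul, le_div_iff₀ hmpos]
    nlinarith [hsum, himg]
end

section
/- Lower bounds for the probability of substitute PSub(k,p). Let p ∈ {k+1,…,n} (so p ≠ j for all 1 ≤ j ≤ k). Then P(⋂_{j=1}^{k} {Y_j = j} ∩ {X = p}) ≥ max{ 0, Σ_{j=1}^{k} [ P(Y_j = j) + P(X = j) − P(X = j, Y = j) ] + P(X = p) − k }. -/
open MeasureTheory

/-!
Write `Aⱼ = {Y_j = j}` and `Bⱼ = {X = j}`. By consistency `{X = j, Y = j} = Aⱼ ∩ Bⱼ`, so each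
summand `P(Aⱼ) + P(Bⱼ) - P(X = j, Y = j)` is `P(Aⱼ ∪ Bⱼ)` by inclusion–exclusion. Since `p ∉ {1, …, k}`,
on `{X = p}` the event `Aⱼ ∪ Bⱼ` reduces to `Aⱼ`, so the event of interest is
`⋂ⱼ (Aⱼ ∪ Bⱼ) ∩ {X = p}`, and the bound is the Bonferroni (Fréchet) inequality
`P(⋂ᵢ Sᵢ) ≥ ∑ᵢ P(Sᵢ) - (m - 1)` for `m = k + 1` events.
-/

namespace MeasureTheory

variable {Ω : Type*} [MeasurableSpace Ω] {μ : Measure Ω}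

theorem measureReal_add_measureReal_sub_one_le_measureReal_inter [IsProbabilityMeasure μ]
    {s t : Set Ω} (hs : MeasurableSet s) :
    μ.real s + μ.real t - 1 ≤ μ.real (s ∩ t) := by
  have h_union : μ.real (s ∪ t) ≤ 1 := measureReal_le_one
  linarith [measureReal_union_add_inter' (μ := μ) (t := t) hs]

theorem sum_measureReal_add_measureReal_sub_card_le_measureReal_biInter_inter
    [IsProbabilityMeasure μ] {ι : Type*} {s : Finset ι} {S : ι → Set Ω}
    (hS : ∀ i ∈ s, MeasurableSet (S i)) (t : Set Ω) :
    ∑ i ∈ s, μ.real (S i) + μ.real t - s.card ≤ μ.real ((⋂ i ∈ s, S i) ∩ t) := by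
  classical
  induction s using Finset.induction_on with
  | empty => simp
  | insert a s ha ih =>
    have ih := ih fun i hi => hS i (Finset.mem_insert_of_mem hi)
    have h_pair := measureReal_add_measureReal_sub_one_le_measureReal_inter (μ := μ)
      (t := (⋂ i ∈ s, S i) ∩ t) (hS a (Finset.mem_insert_self a s))
    rw [Finset.sum_insert ha, Finset.card_insert_of_notMem ha, Finset.set_biInter_insert,
      Set.inter_assoc]
    push_cast
    linarith

theorem measureReal_add_sub_joint_eq_measureReal_union [IsFiniteMeasure μ]
    {β γ : Type*} [MeasurableSpace β] [MeasurableSingletonClass β]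
    {X : Ω → β} {Y : β → Ω → γ} {Yobs : Ω → γ} (hX : Measurable X)
    (hcons : ∀ ω, Yobs ω = Y (X ω) ω) (j : β) (y : γ) :
    μ.real {ω | Y j ω = y} + μ.real {ω | X ω = j} - μ.real {ω | X ω = j ∧ Yobs ω = y} =
      μ.real ({ω | Y j ω = y} ∪ {ω | X ω = j}) := by
  have h_joint : {ω | X ω = j ∧ Yobs ω = y} = {ω | Y j ω = y} ∩ {ω | X ω = j} := by
    ext ω
    simp only [Set.mem_ofPred_eq, Set.mem_inter_iff, hcons ω]
    constructor
    · rintro ⟨rfl, hy⟩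
      exact ⟨hy, rfl⟩
    · rintro ⟨hy, rfl⟩
      exact ⟨rfl, hy⟩
  rw [h_joint]
  linarith [measureReal_union_add_inter (μ := μ) (s := {ω | Y j ω = y}) (t := {ω | X ω = j})
    (hX (measurableSet_singleton j))]

end MeasureTheory

theorem Set.biInter_union_setOf_eq_inter_setOf_eq {Ω ι : Type*} (A : ι → Set Ω) (X : Ω → ι)
    {s : Finset ι} {p : ι} (hp : p ∉ s) :
    (⋂ j ∈ s, A j ∪ {ω | X ω = j}) ∩ {ω | X ω = p} = (⋂ j ∈ s, A j) ∩ {ω | X ω = p} := by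
  ext ω
  simp only [Set.mem_inter_iff, Set.mem_iInter, Set.mem_union, Set.mem_ofPred_eq]
  refine and_congr_left fun hXp => forall₂_congr fun j hj => or_iff_left ?_
  rintro rfl
  exact hp (hXp ▸ hj)

theorem psub_kp_lower_bounds_general
    {Ω : Type*} [MeasurableSpace Ω] (P : Measure Ω) [IsProbabilityMeasure P]
    (n k : ℕ)
    (X : Ω → ℕ) (Y : ℕ → Ω → ℕ) (Yobs : Ω → ℕ)
    (hX : Measurable X) (hY : ∀ j, Measurable (Y j))
    (hcons : ∀ ω, Yobs ω = Y (X ω) ω)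
    (p : ℕ) (hp : p ∈ Finset.Icc (k+1) n) :
    max 0
      ((∑ j ∈ Finset.Icc 1 k,
          ((P {ω | Y j ω = j}).toReal + (P {ω | X ω = j}).toReal - (P {ω | X ω = j ∧ Yobs ω = j}).toReal))
        + (P {ω | X ω = p}).toReal - (k : ℝ)) ≤ (P ((⋂ j ∈ Finset.Icc 1 k, {ω | Y j ω = j}) ∩ {ω | X ω = p})).toReal := by
  have hp_notMem : p ∉ Finset.Icc 1 k := by
    rw [Finset.mem_Icc] at hp ⊢
    omega
  have h_meas : ∀ j ∈ Finset.Icc 1 k, MeasurableSet ({ω | Y j ω = j} ∪ {ω | X ω = j}) :=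
    fun j _ => (hY j (measurableSet_singleton j)).union (hX (measurableSet_singleton j))
  have h_bonferroni := sum_measureReal_add_measureReal_sub_card_le_measureReal_biInter_inter
    (μ := P) h_meas {ω | X ω = p}
  rw [Set.biInter_union_setOf_eq_inter_setOf_eq _ X hp_notMem, Nat.card_Icc,
    Nat.add_sub_cancel] at h_bonferroni
  refine max_le measureReal_nonneg ?_
  simp only [← measureReal_def]
  simpa only [measureReal_add_sub_joint_eq_measureReal_union hX hcons] using h_bonferroni

theorem psub_kp_lower_bounds
    {Ω : Type*} [MeasurableSpace Ω] (P : Measure Ω) [IsProbabilityMeasure P]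
    (n k : ℕ) (hk1 : 1 ≤ k) (hkn : k ≤ n)
    (X : Ω → ℕ) (Y : ℕ → Ω → ℕ) (Yobs : Ω → ℕ)
    (hX : Measurable X) (hY : ∀ j, Measurable (Y j))
    (hXr : ∀ ω, X ω ∈ Finset.Icc 1 n)
    (hYr : ∀ j ω, Y j ω ∈ Finset.Icc 1 n)
    (hcons : ∀ ω, Yobs ω = Y (X ω) ω)
    (p : ℕ) (hp : p ∈ Finset.Icc (k+1) n) :
    max 0
      ((∑ j ∈ Finset.Icc 1 k,
          ((P {ω | Y j ω = j}).toReal + (P {ω | X ω = j}).toReal - (P {ω | X ω = j ∧ Yobs ω = j}).toReal))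
        + (P {ω | X ω = p}).toReal - (k : ℝ)) ≤ (P ((⋂ j ∈ Finset.Icc 1 k, {ω | Y j ω = j}) ∩ {ω | X ω = p})).toReal :=
  psub_kp_lower_bounds_general P n k X Y Yobs hX hY hcons p hp
end

section
/- Lower bounds for the probability of replacement PRep(k,q). Let q ∈ {1,…,n}. Then: (i) P(⋂_{j=1}^{k} {Y_j = j} ∩ {Y = q}) ≥ 0; (ii) P(⋂_{j=1}^{k} {Y_j = j} ∩ {Y = q}) ≥ Σ_{j=1}^{k} [ P(Y_j = j) + P(X = j) − P(X = j, Y = j) ] + Σ_{k+1 ≤ j ≤ n, j ≠ q} P(X = j, Y = q) + P(X = q, Y = q) − k; and (iii) if moreover q ∈ {1,…,k}, then P(⋂_{j=1}^{k} {Y_j = j} ∩ {Y = q}) ≥ Σ_{1 ≤ j ≤ k, j ≠ q} [ P(Y_j = j) + P(X = j) − P(X = j, Y = j) ] + P(X = q, Y = q) − (k − 1). -/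
/-!
Put `D j := {Y j = j} ∪ {X = j}`. By consistency `{X = j, Y = j} = {X = j} ∩ {Y j = j}`, so the
bracketed term is exactly `P (D j)`, and on `{Y = q}` the event `D j` forces `Y j = j` as soon as
`X = j` entails `j = q`. For (ii) intersect the `D j`, `j ≤ k`, with
`{X ∈ {q} ∪ [k+1, n], Y = q}`, whose probability is the sum of the `P (X = j, Y = q)`; for (iii)
intersect the `D j`, `j ≤ k`, `j ≠ q`, with `{X = q, Y = q}`. Both intersections lie in the event
of interest, and the Bonferroni inequality `P (⋂ Eᵢ) ≥ ∑ P Eᵢ - (m - 1)` bounds them from below.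
-/

open MeasureTheory

namespace MeasureTheory

variable {Ω : Type*} [MeasurableSpace Ω] (P : Measure Ω)

theorem measureReal_add_measureReal_sub_one_le_inter [IsProbabilityMeasure P] {s t : Set Ω}
    (hs : MeasurableSet s) :
    P.real s + P.real t - 1 ≤ P.real (s ∩ t) := by
  have h := measureReal_union_add_inter' (μ := P) (t := t) hs
  linarith [measureReal_le_one (μ := P) (s := s ∪ t)]

theorem sum_measureReal_add_measureReal_sub_card_le_biInter_inter [IsProbabilityMeasure P]
    {ι : Type*} (s : Finset ι) (E : ι → Set Ω) (B : Set Ω) (hE : ∀ i ∈ s, MeasurableSet (E i)) :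
    ∑ i ∈ s, P.real (E i) + P.real B - s.card ≤ P.real ((⋂ i ∈ s, E i) ∩ B) := by
  classical
  induction s using Finset.induction_on with
  | empty => simp
  | insert a s ha ih =>
    have hrest := ih fun i hi ↦ hE i (Finset.mem_insert_of_mem hi)
    have hpair := measureReal_add_measureReal_sub_one_le_inter P
      (t := (⋂ i ∈ s, E i) ∩ B) (hE a (Finset.mem_insert_self a s))
    rw [Finset.set_biInter_insert, Set.inter_assoc, Finset.sum_insert ha,
      Finset.card_insert_of_notMem ha]
    push_cast
    linarith

theorem measureReal_biUnion_eq_and {β : Type*} [MeasurableSpace β] [MeasurableSingletonClass β]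
    [IsFiniteMeasure P] {f : Ω → β} {p : Ω → Prop}
    (hf : Measurable f) (hp : MeasurableSet {ω | p ω}) (T : Finset β) :
    P.real (⋃ b ∈ T, {ω | f ω = b ∧ p ω}) = ∑ b ∈ T, P.real {ω | f ω = b ∧ p ω} := by
  refine measureReal_biUnion_finset (fun a _ b _ hab ↦ ?_)
    (fun b _ ↦ (hf (measurableSet_singleton b)).inter hp)
  exact Set.disjoint_left.2 fun ω ha hb ↦ hab (ha.1.symm.trans hb.1)

end MeasureTheory

section Counterfactual

variable {Ω : Type*} {X : Ω → ℕ} {Y : ℕ → Ω → ℕ} {Yobs : Ω → ℕ}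

theorem measurable_of_consistency [MeasurableSpace Ω] (hX : Measurable X)
    (hY : ∀ j, Measurable (Y j)) (hcons : ∀ ω, Yobs ω = Y (X ω) ω) : Measurable Yobs := by
  have hpair : Measurable fun p : ℕ × Ω ↦ Y p.1 p.2 := measurable_from_prod_countable_right hY
  rw [show Yobs = fun ω ↦ Y (X ω) ω from funext hcons]
  exact hpair.comp (hX.prodMk measurable_id)

theorem setOf_treatment_and_obs_eq (hcons : ∀ ω, Yobs ω = Y (X ω) ω) (i j : ℕ) :
    {ω | X ω = j ∧ Yobs ω = i} = {ω | X ω = j} ∩ {ω | Y j ω = i} := by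
  ext ω
  simp only [Set.mem_ofPred_eq, Set.mem_inter_iff, hcons]
  constructor <;> rintro ⟨hx, hy⟩ <;> subst hx <;> exact ⟨rfl, hy⟩

theorem measureReal_potential_union_treatment [MeasurableSpace Ω] (P : Measure Ω)
    [IsFiniteMeasure P] (hX : Measurable X) (hcons : ∀ ω, Yobs ω = Y (X ω) ω) (j : ℕ) :
    P.real ({ω | Y j ω = j} ∪ {ω | X ω = j}) =
      P.real {ω | Y j ω = j} + P.real {ω | X ω = j} - P.real {ω | X ω = j ∧ Yobs ω = j} := by
  have h := measureReal_union_add_inter (μ := P) (s := {ω | Y j ω = j}) (t := {ω | X ω = j})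
    (hX (measurableSet_singleton j))
  rw [setOf_treatment_and_obs_eq hcons, Set.inter_comm]
  linarith

theorem potential_eq_self_of_mem_union (hcons : ∀ ω, Yobs ω = Y (X ω) ω) {ω : Ω} {j q : ℕ}
    (hobs : Yobs ω = q) (hj : X ω = j → j = q) (hD : Y j ω = j ∨ X ω = j) : Y j ω = j := by
  rcases hD with hYj | hXj
  · exact hYj
  · rw [← hXj, ← hcons, hobs, hXj, hj hXj]

theorem biInter_union_inter_biUnion_subset (hcons : ∀ ω, Yobs ω = Y (X ω) ω)
    {s T : Finset ℕ} {q : ℕ} (hsT : ∀ j ∈ s, j ∈ T → j = q) :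
    (⋂ j ∈ s, {ω | Y j ω = j} ∪ {ω | X ω = j}) ∩ ⋃ j ∈ T, {ω | X ω = j ∧ Yobs ω = q} ⊆
      (⋂ j ∈ s, {ω | Y j ω = j}) ∩ {ω | Yobs ω = q} := by
  rintro ω ⟨hD, hC⟩
  simp only [Set.mem_iUnion, Set.mem_ofPred_eq] at hC
  obtain ⟨j₀, hj₀, hX, hobs⟩ := hC
  refine ⟨Set.mem_iInter₂.2 fun j hj ↦ ?_, hobs⟩
  exact potential_eq_self_of_mem_union hcons hobs (fun hXj ↦ hsT j hj (hXj ▸ hX ▸ hj₀))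
    (Set.mem_iInter₂.1 hD j hj)

theorem biInter_erase_union_inter_subset (hcons : ∀ ω, Yobs ω = Y (X ω) ω)
    {s : Finset ℕ} {q : ℕ} :
    (⋂ j ∈ s.erase q, {ω | Y j ω = j} ∪ {ω | X ω = j}) ∩ {ω | X ω = q ∧ Yobs ω = q} ⊆
      (⋂ j ∈ s, {ω | Y j ω = j}) ∩ {ω | Yobs ω = q} := by
  rintro ω ⟨hD, hX, hobs⟩
  refine ⟨Set.mem_iInter₂.2 fun j hj ↦ ?_, hobs⟩
  by_cases hjq : j = q
  · subst hjq
    rw [Set.mem_ofPred_eq, ← hX, ← hcons, hobs, hX]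
  exact potential_eq_self_of_mem_union hcons hobs (fun hXj ↦ (hjq (hXj ▸ hX)).elim)
    (Set.mem_iInter₂.1 hD j (Finset.mem_erase.2 ⟨hjq, hj⟩))

end Counterfactual

theorem prep_kq_lower_bounds_general
    {Ω : Type*} [MeasurableSpace Ω] (P : Measure Ω) [IsProbabilityMeasure P]
    (n k : ℕ) (hk1 : 1 ≤ k)
    (X : Ω → ℕ) (Y : ℕ → Ω → ℕ) (Yobs : Ω → ℕ)
    (hX : Measurable X) (hY : ∀ j, Measurable (Y j))
    (hcons : ∀ ω, Yobs ω = Y (X ω) ω)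
    (q : ℕ) :
    0 ≤ (P ((⋂ j ∈ Finset.Icc 1 k, {ω | Y j ω = j}) ∩ {ω | Yobs ω = q})).toReal ∧
    (∑ j ∈ Finset.Icc 1 k,
        ((P {ω | Y j ω = j}).toReal + (P {ω | X ω = j}).toReal - (P {ω | X ω = j ∧ Yobs ω = j}).toReal))
      + (∑ j ∈ (Finset.Icc (k+1) n).erase q, (P {ω | X ω = j ∧ Yobs ω = q}).toReal)
      + (P {ω | X ω = q ∧ Yobs ω = q}).toReal - (k : ℝ) ≤ (P ((⋂ j ∈ Finset.Icc 1 k, {ω | Y j ω = j}) ∩ {ω | Yobs ω = q})).toReal ∧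
    (q ∈ Finset.Icc 1 k →
      (∑ j ∈ (Finset.Icc 1 k).erase q,
          ((P {ω | Y j ω = j}).toReal + (P {ω | X ω = j}).toReal - (P {ω | X ω = j ∧ Yobs ω = j}).toReal))
        + (P {ω | X ω = q ∧ Yobs ω = q}).toReal - ((k : ℝ) - 1) ≤ (P ((⋂ j ∈ Finset.Icc 1 k, {ω | Y j ω = j}) ∩ {ω | Yobs ω = q})).toReal) := by
  have hYobs := measurable_of_consistency hX hY hcons
  have hD (j : ℕ) : MeasurableSet ({ω | Y j ω = j} ∪ {ω | X ω = j}) := (hY j (measurableSet_singleton j)).union (hX (measurableSet_singleton j))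
  have hsumD (s : Finset ℕ) := Finset.sum_congr rfl fun j (_ : j ∈ s) ↦
    measureReal_potential_union_treatment P hX hcons j
  simp only [← measureReal_def, ← hsumD]
  refine ⟨measureReal_nonneg, ?_, fun hqk ↦ ?_⟩
  · set T := insert q ((Finset.Icc (k + 1) n).erase q)
    have hC := measureReal_biUnion_eq_and P hX
      (p := fun ω ↦ Yobs ω = q) (hYobs (measurableSet_singleton q)) T
    rw [Finset.sum_insert (Finset.notMem_erase q _)] at hC
    have hbound := sum_measureReal_add_measureReal_sub_card_le_biInter_inter P
      (Finset.Icc 1 k) _ (⋃ j ∈ T, {ω | X ω = j ∧ Yobs ω = q}) fun j _ ↦ hD j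
    refine le_trans (le_of_eq_of_le ?_ hbound) (measureReal_mono ?_)
    · rw [hC, Nat.card_Icc, Nat.add_sub_cancel]
      ring
    refine biInter_union_inter_biUnion_subset hcons fun j hj hjT ↦ ?_
    simp only [T, Finset.mem_insert, Finset.mem_erase, Finset.mem_Icc] at hj hjT
    omega
  · have hbound := sum_measureReal_add_measureReal_sub_card_le_biInter_inter P
      ((Finset.Icc 1 k).erase q) _ {ω | X ω = q ∧ Yobs ω = q}
      fun j _ ↦ hD j
    refine le_trans (le_of_eq_of_le ?_ hbound) (measureReal_mono ?_)
    · rw [Finset.card_erase_of_mem hqk, Nat.card_Icc, Nat.add_sub_cancel, Nat.cast_pred hk1]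
    exact biInter_erase_union_inter_subset hcons

theorem prep_kq_lower_bounds
    {Ω : Type*} [MeasurableSpace Ω] (P : Measure Ω) [IsProbabilityMeasure P]
    (n k : ℕ) (hk1 : 1 ≤ k) (hkn : k ≤ n)
    (X : Ω → ℕ) (Y : ℕ → Ω → ℕ) (Yobs : Ω → ℕ)
    (hX : Measurable X) (hY : ∀ j, Measurable (Y j))
    (hXr : ∀ ω, X ω ∈ Finset.Icc 1 n)
    (hYr : ∀ j ω, Y j ω ∈ Finset.Icc 1 n)
    (hcons : ∀ ω, Yobs ω = Y (X ω) ω)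
    (q : ℕ) (hq : q ∈ Finset.Icc 1 n) :
    0 ≤ (P ((⋂ j ∈ Finset.Icc 1 k, {ω | Y j ω = j}) ∩ {ω | Yobs ω = q})).toReal ∧
    (∑ j ∈ Finset.Icc 1 k,
        ((P {ω | Y j ω = j}).toReal + (P {ω | X ω = j}).toReal - (P {ω | X ω = j ∧ Yobs ω = j}).toReal))
      + (∑ j ∈ (Finset.Icc (k+1) n).erase q, (P {ω | X ω = j ∧ Yobs ω = q}).toReal)
      + (P {ω | X ω = q ∧ Yobs ω = q}).toReal - (k : ℝ) ≤ (P ((⋂ j ∈ Finset.Icc 1 k, {ω | Y j ω = j}) ∩ {ω | Yobs ω = q})).toReal ∧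
    (q ∈ Finset.Icc 1 k →
      (∑ j ∈ (Finset.Icc 1 k).erase q,
          ((P {ω | Y j ω = j}).toReal + (P {ω | X ω = j}).toReal - (P {ω | X ω = j ∧ Yobs ω = j}).toReal))
        + (P {ω | X ω = q ∧ Yobs ω = q}).toReal - ((k : ℝ) - 1) ≤ (P ((⋂ j ∈ Finset.Icc 1 k, {ω | Y j ω = j}) ∩ {ω | Yobs ω = q})).toReal) :=
  prep_kq_lower_bounds_general P n k hk1 X Y Yobs hX hY hcons q
end

section
/- Replaceability for the PNS(k) lower bounds: for an arbitrary assignment v : {1,…,k} → {1,…,n} of target outcome values, the probability P(⋂_{j=1}^{k} {Y_j = v(j)}) satisfies: (i) P(⋂_{j=1}^{k} {Y_j = v(j)}) ≥ 0; (ii) P(⋂_{j=1}^{k} {Y_j = v(j)}) ≥ Σ_{j=1}^{k} P(Y_j = v(j)) − k + 1; (iii) for every i ∈ {1,…,k}, P(⋂_{j=1}^{k} {Y_j = v(j)}) ≥ Σ_{1 ≤ j ≤ k, j ≠ i} [ P(Y_j = v(j)) + P(X = j) − P(X = j, Y = v(j)) ] + P(X = i, Y = v(i)) − k + 1. -/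
/-!
With `Aⱼ = {Yⱼ = v j}`, both bounds are Fréchet's inequality `P(⋂ Aⱼ) ≥ ∑ P(Aⱼ) - k + 1`,
i.e. the union bound applied to the complements. For (iii) it is applied to the smaller event
`{X = i, Yᵢ = v i} ∩ ⋂_{j ≠ i} (Aⱼ ∪ {X = j})`, which lies in `⋂ Aⱼ` because `X` takes only
one value; by consistency `{X = i, Yᵢ = v i}` is the observable event `{X = i, Y = v i}`, and
`P(Aⱼ ∪ {X = j})` is the summand in (iii) by inclusion–exclusion.
-/

open MeasureTheory Finset Function

theorem Set.inter_biInter_erase_union_subset_biInter {α ι : Type*} [DecidableEq ι] {A B : ι → Set α}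
    (hB : Pairwise (Disjoint on B)) (s : Finset ι) (i : ι) :
    (B i ∩ A i) ∩ ⋂ j ∈ s.erase i, (A j ∪ B j) ⊆ ⋂ j ∈ s, A j := by
  rintro ω ⟨⟨hBi, hAi⟩, hω⟩
  simp only [Set.mem_iInter, mem_erase] at hω ⊢
  intro j hj
  by_cases hji : j = i
  · exact hji ▸ hAi
  · exact (hω j ⟨hji, hj⟩).resolve_right fun hBj =>
      Set.disjoint_left.mp (hB hji) hBj hBi

namespace MeasureTheory

variable {Ω ι : Type*} [MeasurableSpace Ω] {P : Measure Ω} [IsProbabilityMeasure P]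

theorem sum_measureReal_sub_card_add_one_le_measureReal_biInter (s : Finset ι) {A : ι → Set Ω}
    (hA : ∀ j ∈ s, NullMeasurableSet (A j) P) :
    ∑ j ∈ s, P.real (A j) - #s + 1 ≤ P.real (⋂ j ∈ s, A j) := by
  have hA_compl : ∀ j ∈ s, P.real (A j)ᶜ = 1 - P.real (A j) := fun j hj =>
    probReal_compl_eq_one_sub₀ (hA j hj)
  have hunion : P.real (⋃ j ∈ s, (A j)ᶜ) ≤ ∑ j ∈ s, P.real (A j)ᶜ :=
    measureReal_biUnion_finset_le s _
  rw [← Set.compl_iInter₂, probReal_compl_eq_one_sub₀ (s.nullMeasurableSet_biInter hA),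
    sum_congr rfl hA_compl, sum_sub_distrib, sum_const, nsmul_one] at hunion
  linarith

/-- Fréchet's inequality in which, for a pairwise disjoint family `B`, each `A j` with `j ≠ i` is
enlarged to `A j ∪ B j` at the price of shrinking `A i` to `B i ∩ A i`. -/
theorem measureReal_inter_add_sum_sub_card_add_one_le_measureReal_biInter [DecidableEq ι]
    {A B : ι → Set Ω}
    (hA : ∀ j, NullMeasurableSet (A j) P) (hB : ∀ j, NullMeasurableSet (B j) P)
    (hBd : Pairwise (Disjoint on B)) {s : Finset ι} {i : ι} (hi : i ∈ s) :
    ∑ j ∈ s.erase i, (P.real (A j) + P.real (B j) - P.real (B j ∩ A j)) + P.real (B i ∩ A i)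
      - #s + 1 ≤ P.real (⋂ j ∈ s, A j) := by
  set C : ι → Set Ω := fun j => if j = i then B i ∩ A i else A j ∪ B j
  have hC_i : C i = B i ∩ A i := if_pos rfl
  have hC_erase : ∀ j ∈ s.erase i, C j = A j ∪ B j := fun j hj =>
    if_neg (ne_of_mem_erase hj)
  have hC_inter : ⋂ j ∈ s, C j = (B i ∩ A i) ∩ ⋂ j ∈ s.erase i, (A j ∪ B j) := by
    rw [← insert_erase hi, set_biInter_insert, hC_i, erase_insert (notMem_erase i s)]
    exact congrArg _ (Set.iInter₂_congr hC_erase)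
  have hC_sum :
      ∑ j ∈ s, P.real (C j) = P.real (B i ∩ A i) + ∑ j ∈ s.erase i, P.real (A j ∪ B j) := by
    rw [← add_sum_erase s _ hi, hC_i, sum_congr rfl fun j hj => congrArg P.real (hC_erase j hj)]
  have hunion : ∀ j, P.real (A j ∪ B j) = P.real (A j) + P.real (B j) - P.real (B j ∩ A j) :=
    fun j => by
      rw [Set.inter_comm]
      linarith [measureReal_union_add_inter₀ (μ := P) (s := A j) (hB j)]
  have hfrechet := sum_measureReal_sub_card_add_one_le_measureReal_biInter (P := P) s
    (A := C) fun j _ => by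
      by_cases hj : j = i
      · simpa [C, hj] using (hB i).inter (hA i)
      · simpa [C, hj] using (hA j).union (hB j)
  rw [hC_sum, hC_inter] at hfrechet
  calc _ = P.real (B i ∩ A i) + ∑ j ∈ s.erase i, P.real (A j ∪ B j) - #s + 1 := by
          simp only [hunion]; ring
    _ ≤ _ := hfrechet
    _ ≤ _ := measureReal_mono (Set.inter_biInter_erase_union_subset_biInter hBd s i)

end MeasureTheory

theorem pns_k_lower_bounds_replaceability_general
    {Ω : Type*} [MeasurableSpace Ω] (P : Measure Ω) [IsProbabilityMeasure P]
    (k : ℕ)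
    (X : Ω → ℕ) (Y : ℕ → Ω → ℕ) (Yobs : Ω → ℕ)
    (hX : Measurable X) (hY : ∀ j, Measurable (Y j))
    (hcons : ∀ ω, Yobs ω = Y (X ω) ω)
    (v : ℕ → ℕ) :
    0 ≤ (P (⋂ j ∈ Finset.Icc 1 k, {ω | Y j ω = v j})).toReal ∧
    (∑ j ∈ Finset.Icc 1 k, (P {ω | Y j ω = v j}).toReal) - (k : ℝ) + 1 ≤ (P (⋂ j ∈ Finset.Icc 1 k, {ω | Y j ω = v j})).toReal ∧
    ∀ i ∈ Finset.Icc 1 k,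
      (∑ j ∈ (Finset.Icc 1 k).erase i,
          ((P {ω | Y j ω = v j}).toReal + (P {ω | X ω = j}).toReal - (P {ω | X ω = j ∧ Yobs ω = v j}).toReal))
        + (P {ω | X ω = i ∧ Yobs ω = v i}).toReal - (k : ℝ) + 1 ≤ (P (⋂ j ∈ Finset.Icc 1 k, {ω | Y j ω = v j})).toReal := by
  have hA : ∀ j, NullMeasurableSet {ω | Y j ω = v j} P := fun j =>
    (hY j (measurableSet_singleton _)).nullMeasurableSet
  have hB : ∀ j, NullMeasurableSet {ω | X ω = j} P := fun j =>
    (hX (measurableSet_singleton _)).nullMeasurableSet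
  have hcard : (#(Icc 1 k) : ℝ) = k := by simp
  have hobserved : ∀ j, {ω | X ω = j ∧ Yobs ω = v j} = {ω | X ω = j} ∩ {ω | Y j ω = v j} := by
    intro j
    ext ω
    simp only [Set.mem_ofPred_eq, Set.mem_inter_iff, hcons]
    exact and_congr_right fun hXj => by rw [hXj]
  refine ⟨ENNReal.toReal_nonneg, ?_, fun i hi => ?_⟩
  · simpa only [Measure.real, hcard] using
      sum_measureReal_sub_card_add_one_le_measureReal_biInter (P := P) (Icc 1 k) fun j _ => hA j
  · simpa only [Measure.real, hobserved, hcard] using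
      measureReal_inter_add_sum_sub_card_add_one_le_measureReal_biInter (P := P) hA hB
        (pairwise_disjoint_fiber X) hi

theorem pns_k_lower_bounds_replaceability
    {Ω : Type*} [MeasurableSpace Ω] (P : Measure Ω) [IsProbabilityMeasure P]
    (n k : ℕ) (hk1 : 1 ≤ k) (hkn : k ≤ n)
    (X : Ω → ℕ) (Y : ℕ → Ω → ℕ) (Yobs : Ω → ℕ)
    (hX : Measurable X) (hY : ∀ j, Measurable (Y j))
    (hXr : ∀ ω, X ω ∈ Finset.Icc 1 n)
    (hYr : ∀ j ω, Y j ω ∈ Finset.Icc 1 n)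
    (hcons : ∀ ω, Yobs ω = Y (X ω) ω)
    (v : ℕ → ℕ) (hv : ∀ j ∈ Finset.Icc 1 k, v j ∈ Finset.Icc 1 n) :
    0 ≤ (P (⋂ j ∈ Finset.Icc 1 k, {ω | Y j ω = v j})).toReal ∧
    (∑ j ∈ Finset.Icc 1 k, (P {ω | Y j ω = v j}).toReal) - (k : ℝ) + 1 ≤ (P (⋂ j ∈ Finset.Icc 1 k, {ω | Y j ω = v j})).toReal ∧
    ∀ i ∈ Finset.Icc 1 k,
      (∑ j ∈ (Finset.Icc 1 k).erase i,
          ((P {ω | Y j ω = v j}).toReal + (P {ω | X ω = j}).toReal - (P {ω | X ω = j ∧ Yobs ω = v j}).toReal))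
        + (P {ω | X ω = i ∧ Yobs ω = v i}).toReal - (k : ℝ) + 1 ≤ (P (⋂ j ∈ Finset.Icc 1 k, {ω | Y j ω = v j})).toReal :=
  pns_k_lower_bounds_replaceability_general P k X Y Yobs hX hY hcons v
end

section
/- Replaceability for the PNS(k) upper bounds: for an arbitrary assignment v : {1,…,k} → {1,…,n} of target outcome values, the probability P(⋂_{j=1}^{k} {Y_j = v(j)}) satisfies: (i) P(⋂_{j=1}^{k} {Y_j = v(j)}) ≤ Σ_{j=1}^{k} P(X = j, Y = v(j)) + Σ_{j=k+1}^{n} P(X = j); (ii) for every j ∈ {1,…,k}, P(⋂_{j=1}^{k} {Y_j = v(j)}) ≤ P(Y_j = v(j)); (iii) for every m ∈ {1,…,k−1} and every choice of pairwise distinct indices t_0, t_1, …, t_m ∈ {1,…,k}, P(⋂_{j=1}^{k} {Y_j = v(j)}) ≤ (1/m) · Σ_{j=0}^{m} [ P(Y_{t_j} = v(t_j)) − P(X = t_j, Y = v(t_j)) ]. -/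
/-!
Let `E = ⋂_{j ≤ k} {Y_j = v j}`. By consistency, `E ∩ {X = j} ⊆ {X = j, Y = v j}` for `j ≤ k`,
so covering `E` by the events `{X = j}` gives (i), and (ii) is monotonicity. For (iii), each
index `i` gives `P(E) ≤ P(E ∩ {X = i}) + P(Y_i = v i) - P(X = i, Y = v i)`; summing over the
`m + 1` distinct indices `t_j`, the events `E ∩ {X = t_j}` are disjoint, so their probabilities
add up to at most `P(E)`, which leaves `m · P(E)` on the left.
-/

open MeasureTheory Set

namespace MeasureTheory

variable {Ω ι : Type*} [MeasurableSpace Ω] {μ : Measure Ω} [IsFiniteMeasure μ]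

lemma measureReal_add_measureReal_inter_le {E B A : Set Ω} (hEB : E ⊆ B) (hA : MeasurableSet A) :
    μ.real E + μ.real (B ∩ A) ≤ μ.real (E ∩ A) + μ.real B := by
  have hE := measureReal_inter_add_sdiff (μ := μ) (s := E) hA
  have hB := measureReal_inter_add_sdiff (μ := μ) (s := B) hA
  have hdiff : μ.real (E \ A) ≤ μ.real (B \ A) := measureReal_mono (sdiff_subset_sdiff_left hEB)
  linarith

lemma sum_measureReal_inter_le {s : Finset ι} {A : ι → Set Ω}
    (hA : ∀ i ∈ s, MeasurableSet (A i)) (hd : PairwiseDisjoint ↑s A) (E : Set Ω) :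
    ∑ i ∈ s, μ.real (E ∩ A i) ≤ μ.real E :=
  calc ∑ i ∈ s, μ.real (E ∩ A i) = ∑ i ∈ s, (μ.restrict E).real (A i) :=
        Finset.sum_congr rfl fun i hi => by rw [measureReal_restrict_apply (hA i hi), inter_comm]
    _ ≤ (μ.restrict E).real univ := sum_measureReal_le_measureReal_univ hA hd
    _ = μ.real E := measureReal_restrict_apply_univ E

lemma card_sub_one_mul_measureReal_le {s : Finset ι} {E : Set Ω} {A B : ι → Set Ω}
    (hA : ∀ i ∈ s, MeasurableSet (A i)) (hd : PairwiseDisjoint ↑s A) (hEB : ∀ i ∈ s, E ⊆ B i) :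
    ((s.card : ℝ) - 1) * μ.real E ≤ ∑ i ∈ s, (μ.real (B i) - μ.real (B i ∩ A i)) := by
  have hsum := Finset.sum_le_sum fun i hi =>
    measureReal_add_measureReal_inter_le (μ := μ) (hEB i hi) (hA i hi)
  have hdisj := sum_measureReal_inter_le (μ := μ) hA hd E
  rw [Finset.sum_add_distrib, Finset.sum_add_distrib, Finset.sum_const, nsmul_eq_mul] at hsum
  rw [Finset.sum_sub_distrib]
  linarith

end MeasureTheory

section Counterfactual

variable {Ω α β : Type*} {X : Ω → α} {Y : α → Ω → β} {Yobs : Ω → β}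

lemma setOf_treatment_and_observed_eq (hcons : ∀ ω, Yobs ω = Y (X ω) ω) (j : α) (c : β) :
    {ω | X ω = j ∧ Yobs ω = c} = {ω | Y j ω = c} ∩ {ω | X ω = j} := by
  ext ω
  simp only [mem_ofPred_eq, mem_inter_iff, hcons]
  constructor
  · rintro ⟨rfl, h⟩
    exact ⟨h, rfl⟩
  · rintro ⟨h, rfl⟩
    exact ⟨rfl, h⟩

lemma measureReal_iInter_le_sum_add_sum [MeasurableSpace Ω] {μ : Measure Ω} [IsFiniteMeasure μ]
    (hcons : ∀ ω, Yobs ω = Y (X ω) ω) {S T : Finset α} (hX : ∀ ω, X ω ∈ S ∨ X ω ∈ T) (v : α → β) :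
    μ.real (⋂ j ∈ S, {ω | Y j ω = v j}) ≤
      ∑ j ∈ S, μ.real {ω | X ω = j ∧ Yobs ω = v j} + ∑ j ∈ T, μ.real {ω | X ω = j} := by
  have hcover : ⋂ j ∈ S, {ω | Y j ω = v j} ⊆
      (⋃ j ∈ S, {ω | X ω = j ∧ Yobs ω = v j}) ∪ ⋃ j ∈ T, {ω | X ω = j} := by
    intro ω hω
    rcases hX ω with h | h
    · exact Or.inl (mem_biUnion h ⟨rfl, by rw [hcons]; exact mem_iInter₂.1 hω _ h⟩)
    · exact Or.inr (mem_biUnion h rfl)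
  calc _ ≤ _ := measureReal_mono hcover
    _ ≤ _ := (measureReal_union_le _ _).trans
      (add_le_add (measureReal_biUnion_finset_le _ _) (measureReal_biUnion_finset_le _ _))

end Counterfactual

theorem pns_k_upper_bounds_replaceability_general
    {Ω : Type*} [MeasurableSpace Ω] (P : Measure Ω) [IsProbabilityMeasure P]
    (n k : ℕ)
    (X : Ω → ℕ) (Y : ℕ → Ω → ℕ) (Yobs : Ω → ℕ)
    (hX : Measurable X)
    (hXr : ∀ ω, X ω ∈ Finset.Icc 1 n)
    (hcons : ∀ ω, Yobs ω = Y (X ω) ω)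
    (v : ℕ → ℕ) :
    (P (⋂ j ∈ Finset.Icc 1 k, {ω | Y j ω = v j})).toReal ≤
      (∑ j ∈ Finset.Icc 1 k, (P {ω | X ω = j ∧ Yobs ω = v j}).toReal)
        + ∑ j ∈ Finset.Icc (k+1) n, (P {ω | X ω = j}).toReal ∧
    (∀ j ∈ Finset.Icc 1 k, (P (⋂ j ∈ Finset.Icc 1 k, {ω | Y j ω = v j})).toReal ≤ (P {ω | Y j ω = v j}).toReal) ∧
    ∀ m : ℕ, 1 ≤ m → m < k → ∀ t : ℕ → ℕ,
      (∀ j ∈ Finset.range (m+1), t j ∈ Finset.Icc 1 k) →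
      Set.InjOn t ↑(Finset.range (m+1)) →
      (P (⋂ j ∈ Finset.Icc 1 k, {ω | Y j ω = v j})).toReal ≤
        (1 / (m : ℝ)) * ∑ j ∈ Finset.range (m+1),
          ((P {ω | Y (t j) ω = v (t j)}).toReal - (P {ω | X ω = t j ∧ Yobs ω = v (t j)}).toReal) := by
  simp only [← measureReal_def]
  set E := ⋂ j ∈ Finset.Icc 1 k, {ω | Y j ω = v j}
  have hE : ∀ j ∈ Finset.Icc 1 k, E ⊆ {ω | Y j ω = v j} := fun j hj => iInter₂_subset j hj
  refine ⟨?_, fun j hj => measureReal_mono (hE j hj), ?_⟩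
  · refine measureReal_iInter_le_sum_add_sum hcons (fun ω => ?_) v
    have := hXr ω
    simp only [Finset.mem_Icc] at this ⊢
    omega
  · intro m hm _ t ht htinj
    have hd : PairwiseDisjoint ↑(Finset.range (m+1)) fun i => {ω | X ω = t i} :=
      htinj.pairwiseDisjoint_image.1 ((pairwiseDisjoint_fiber X _).subset (subset_univ _))
    have key := card_sub_one_mul_measureReal_le (μ := P) (A := fun i => {ω | X ω = t i})
      (fun i _ => hX (measurableSet_singleton (t i))) hd (fun i hi => hE _ (ht i hi))
    simp only [Finset.card_range, Nat.cast_add, Nat.cast_one, add_sub_cancel_right,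
      ← setOf_treatment_and_observed_eq hcons] at key
    rw [one_div, inv_mul_eq_div, le_div_iff₀ (by exact_mod_cast hm)]
    linarith

theorem pns_k_upper_bounds_replaceability
    {Ω : Type*} [MeasurableSpace Ω] (P : Measure Ω) [IsProbabilityMeasure P]
    (n k : ℕ) (hk1 : 1 ≤ k) (hkn : k ≤ n)
    (X : Ω → ℕ) (Y : ℕ → Ω → ℕ) (Yobs : Ω → ℕ)
    (hX : Measurable X) (hY : ∀ j, Measurable (Y j))
    (hXr : ∀ ω, X ω ∈ Finset.Icc 1 n)
    (hYr : ∀ j ω, Y j ω ∈ Finset.Icc 1 n)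
    (hcons : ∀ ω, Yobs ω = Y (X ω) ω)
    (v : ℕ → ℕ) (hv : ∀ j ∈ Finset.Icc 1 k, v j ∈ Finset.Icc 1 n) :
    (P (⋂ j ∈ Finset.Icc 1 k, {ω | Y j ω = v j})).toReal ≤
      (∑ j ∈ Finset.Icc 1 k, (P {ω | X ω = j ∧ Yobs ω = v j}).toReal)
        + ∑ j ∈ Finset.Icc (k+1) n, (P {ω | X ω = j}).toReal ∧
    (∀ j ∈ Finset.Icc 1 k, (P (⋂ j ∈ Finset.Icc 1 k, {ω | Y j ω = v j})).toReal ≤ (P {ω | Y j ω = v j}).toReal) ∧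
    ∀ m : ℕ, 1 ≤ m → m < k → ∀ t : ℕ → ℕ,
      (∀ j ∈ Finset.range (m+1), t j ∈ Finset.Icc 1 k) →
      Set.InjOn t ↑(Finset.range (m+1)) →
      (P (⋂ j ∈ Finset.Icc 1 k, {ω | Y j ω = v j})).toReal ≤
        (1 / (m : ℝ)) * ∑ j ∈ Finset.range (m+1),
          ((P {ω | Y (t j) ω = v (t j)}).toReal - (P {ω | X ω = t j ∧ Yobs ω = v (t j)}).toReal) :=
  pns_k_upper_bounds_replaceability_general P n k X Y Yobs hX hXr hcons v
end

section
/- Replaceability for the PN(k,p,q) lower bounds: let p ∈ {k+1,…,n}, q ∈ {1,…,n}, and let v : {1,…,k} → {1,…,n} be an arbitrary assignment of target outcome values. Then P(⋂_{j=1}^{k} {Y_j = v(j)} ∩ {X = p} ∩ {Y = q}) ≥ max{ 0, Σ_{j=1}^{k} [ P(Y_j = v(j)) + P(X = j) − P(X = j, Y = v(j)) ] + P(X = p, Y = q) − k }. -/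
open MeasureTheory Finset

/-!
Write `A j = {Y_j = v(j)}`. By consistency `{X = j, Y = v(j)} = {X = j} ∩ A j`, so each summand
`P(A j) + P(X = j) - P(X = j, Y = v(j))` is the probability of `A j ∪ {X = j}`, and Bonferroni's
inequality bounds the probability of `⋂ j (A j ∪ {X = j}) ∩ {X = p, Y = q}` from below by the
right-hand side. Since `p > k`, on `{X = p}` none of the events `{X = j}` with `j ≤ k` occurs, so
this intersection is exactly the event `⋂ j A j ∩ {X = p} ∩ {Y = q}`.
-/

section Bonferroni

variable {Ω : Type*} [MeasurableSpace Ω] (P : Measure Ω) [IsZeroOrProbabilityMeasure P]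

theorem measureReal_add_measureReal_sub_one_le_inter {s : Set Ω} (t : Set Ω)
    (hs : MeasurableSet s) : P.real s + P.real t - 1 ≤ P.real (s ∩ t) := by
  have := measureReal_union_add_inter' (μ := P) (t := t) hs
  linarith [measureReal_le_one (μ := P) (s := s ∪ t)]

theorem sum_measureReal_add_measureReal_sub_card_le_biInter_inter {ι : Type*} (s : Finset ι)
    {f : ι → Set Ω} (hf : ∀ i ∈ s, MeasurableSet (f i)) (t : Set Ω) :
    ∑ i ∈ s, P.real (f i) + P.real t - #s ≤ P.real ((⋂ i ∈ s, f i) ∩ t) := by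
  classical
  induction s using Finset.induction_on with
  | empty => simp
  | insert a s ha ih =>
    have ih := ih fun i hi => hf i (mem_insert_of_mem hi)
    have hinter := measureReal_add_measureReal_sub_one_le_inter P ((⋂ i ∈ s, f i) ∩ t)
      (hf a (mem_insert_self a s))
    rw [sum_insert ha, card_insert_of_notMem ha, set_biInter_insert, Set.inter_assoc]
    push_cast
    linarith

end Bonferroni

section Consistency

variable {Ω α β : Type*} (X : Ω → α) (Y : α → Ω → β)

theorem biInter_union_fiber_inter_eq {s : Finset α} {p : α} (hp : p ∉ s) (A : α → Set Ω)
    (E : Set Ω) (hE : E ⊆ {ω | X ω = p}) :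
    (⋂ j ∈ s, (A j ∪ {ω | X ω = j})) ∩ E = (⋂ j ∈ s, A j) ∩ E := by
  ext ω
  simp only [Set.mem_inter_iff, Set.mem_iInter, Set.mem_union, Set.mem_ofPred_eq]
  refine ⟨fun ⟨h, hωE⟩ => ⟨fun j hj => (h j hj).resolve_right ?_, hωE⟩,
    fun ⟨h, hωE⟩ => ⟨fun j hj => Or.inl (h j hj), hωE⟩⟩
  rintro rfl
  exact hp (hE hωE ▸ hj)

theorem setOf_eq_and_observed_eq {Yobs : Ω → β} (hcons : ∀ ω, Yobs ω = Y (X ω) ω)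
    (j : α) (i : β) :
    {ω | X ω = j ∧ Yobs ω = i} = {ω | X ω = j} ∩ {ω | Y j ω = i} := by
  ext ω
  simp only [Set.mem_ofPred_eq, Set.mem_inter_iff, hcons]
  constructor <;> rintro ⟨rfl, h⟩ <;> exact ⟨rfl, h⟩

end Consistency

theorem pn_kpq_lower_bounds_replaceability_general
    {Ω : Type*} [MeasurableSpace Ω] (P : Measure Ω) [IsProbabilityMeasure P]
    (n k : ℕ)
    (X : Ω → ℕ) (Y : ℕ → Ω → ℕ) (Yobs : Ω → ℕ)
    (hX : Measurable X) (hY : ∀ j, Measurable (Y j))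
    (hcons : ∀ ω, Yobs ω = Y (X ω) ω)
    (p : ℕ) (hp : p ∈ Finset.Icc (k+1) n)
    (q : ℕ)
    (v : ℕ → ℕ) :
    max 0
      ((∑ j ∈ Finset.Icc 1 k,
          ((P {ω | Y j ω = v j}).toReal + (P {ω | X ω = j}).toReal - (P {ω | X ω = j ∧ Yobs ω = v j}).toReal))
        + (P {ω | X ω = p ∧ Yobs ω = q}).toReal - (k : ℝ)) ≤ (P ((⋂ j ∈ Finset.Icc 1 k, {ω | Y j ω = v j}) ∩ {ω | X ω = p} ∩ {ω | Yobs ω = q})).toReal := by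
  have hpk : p ∉ Icc 1 k := by simp only [mem_Icc] at hp ⊢; omega
  have hunion (j : ℕ) : P.real ({ω | Y j ω = v j} ∪ {ω | X ω = j}) =
      P.real {ω | Y j ω = v j} + P.real {ω | X ω = j} - P.real {ω | X ω = j ∧ Yobs ω = v j} := by
    rw [setOf_eq_and_observed_eq X Y hcons, Set.inter_comm]
    linarith [measureReal_union_add_inter (μ := P) (s := {ω | Y j ω = v j})
      (t := {ω | X ω = j}) (hX (measurableSet_singleton j))]
  have hbonf := sum_measureReal_add_measureReal_sub_card_le_biInter_inter P (Icc 1 k)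
    (f := fun j => {ω | Y j ω = v j} ∪ {ω | X ω = j})
    (fun j _ => (hY j (measurableSet_singleton (v j))).union (hX (measurableSet_singleton j)))
    {ω | X ω = p ∧ Yobs ω = q}
  rw [biInter_union_fiber_inter_eq X hpk _ _ fun ω h => h.1, Nat.card_Icc,
    Nat.add_sub_cancel, sum_congr rfl fun j _ => hunion j] at hbonf
  refine max_le measureReal_nonneg ?_
  simp only [← measureReal_def]
  rwa [Set.inter_assoc, ← Set.ofPred_and]

theorem pn_kpq_lower_bounds_replaceability
    {Ω : Type*} [MeasurableSpace Ω] (P : Measure Ω) [IsProbabilityMeasure P]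
    (n k : ℕ) (hk1 : 1 ≤ k) (hkn : k ≤ n)
    (X : Ω → ℕ) (Y : ℕ → Ω → ℕ) (Yobs : Ω → ℕ)
    (hX : Measurable X) (hY : ∀ j, Measurable (Y j))
    (hXr : ∀ ω, X ω ∈ Finset.Icc 1 n)
    (hYr : ∀ j ω, Y j ω ∈ Finset.Icc 1 n)
    (hcons : ∀ ω, Yobs ω = Y (X ω) ω)
    (p : ℕ) (hp : p ∈ Finset.Icc (k+1) n)
    (q : ℕ) (hq : q ∈ Finset.Icc 1 n)
    (v : ℕ → ℕ) (hv : ∀ j ∈ Finset.Icc 1 k, v j ∈ Finset.Icc 1 n) :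
    max 0
      ((∑ j ∈ Finset.Icc 1 k,
          ((P {ω | Y j ω = v j}).toReal + (P {ω | X ω = j}).toReal - (P {ω | X ω = j ∧ Yobs ω = v j}).toReal))
        + (P {ω | X ω = p ∧ Yobs ω = q}).toReal - (k : ℝ)) ≤ (P ((⋂ j ∈ Finset.Icc 1 k, {ω | Y j ω = v j}) ∩ {ω | X ω = p} ∩ {ω | Yobs ω = q})).toReal :=
  pn_kpq_lower_bounds_replaceability_general P n k X Y Yobs hX hY hcons p hp q v
end

section
/- Pairwise upper bound lemma (the m = 1 case proven in the PNS(k) upper-bound proof): for every pair of distinct indices t_0, t_1 ∈ {1,…,k}, P(⋂_{j=1}^{k} {Y_j = j}) ≤ P(Y_{t_0} = t_0) + P(Y_{t_1} = t_1) − P(X = t_0, Y = t_0) − P(X = t_1, Y = t_1). -/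
/-! The event that every `Y j` equals `j` lies in `{Y t₀ = t₀} ∩ {Y t₁ = t₁}`, while the
disjoint events `{X = t₀, Y = t₀}` and `{X = t₁, Y = t₁}` lie, by consistency, in
`{Y t₀ = t₀}` and `{Y t₁ = t₁}` respectively, hence their union lies in the union of these.
Inclusion–exclusion `P(A ∪ B) + P(A ∩ B) = P A + P B` then gives the bound. -/

open MeasureTheory

theorem measureReal_add_add_le_add_of_subset {α : Type*} [MeasurableSpace α] {μ : Measure α}
    [IsFiniteMeasure μ] {S A B E F : Set α} (hB : MeasurableSet B) (hF : MeasurableSet F)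
    (hS : S ⊆ A ∩ B) (hEA : E ⊆ A) (hFB : F ⊆ B) (hEF : Disjoint E F) :
    μ.real S + μ.real E + μ.real F ≤ μ.real A + μ.real B := by
  have hSAB : μ.real S ≤ μ.real (A ∩ B) := measureReal_mono hS
  have hEFAB : μ.real (E ∪ F) ≤ μ.real (A ∪ B) :=
    measureReal_mono (Set.union_subset_union hEA hFB)
  have hEF_union : μ.real (E ∪ F) = μ.real E + μ.real F := measureReal_union hEF hF
  have hincl_excl : μ.real (A ∪ B) + μ.real (A ∩ B) = μ.real A + μ.real B :=
    measureReal_union_add_inter hB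
  linarith

theorem setOf_treatment_eq_and_observed_eq {Ω : Type*} {X : Ω → ℕ} {Y : ℕ → Ω → ℕ} {Yobs : Ω → ℕ}
    (hcons : ∀ ω, Yobs ω = Y (X ω) ω) (t y : ℕ) :
    {ω | X ω = t ∧ Yobs ω = y} = {ω | X ω = t ∧ Y t ω = y} := by
  ext ω
  simp only [Set.mem_ofPred_eq, hcons ω]
  exact and_congr_right fun ht ↦ by rw [ht]

theorem pns_k_pairwise_upper_bound_general
    {Ω : Type*} [MeasurableSpace Ω] (P : Measure Ω) [IsProbabilityMeasure P]
    (k : ℕ)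
    (X : Ω → ℕ) (Y : ℕ → Ω → ℕ) (Yobs : Ω → ℕ)
    (hX : Measurable X) (hY : ∀ j, Measurable (Y j))
    (hcons : ∀ ω, Yobs ω = Y (X ω) ω) :
    ∀ t₀ ∈ Finset.Icc 1 k, ∀ t₁ ∈ Finset.Icc 1 k, t₀ ≠ t₁ →
      (P (⋂ j ∈ Finset.Icc 1 k, {ω | Y j ω = j})).toReal ≤
        (P {ω | Y t₀ ω = t₀}).toReal + (P {ω | Y t₁ ω = t₁}).toReal - (P {ω | X ω = t₀ ∧ Yobs ω = t₀}).toReal - (P {ω | X ω = t₁ ∧ Yobs ω = t₁}).toReal := by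
  intro t₀ ht₀ t₁ ht₁ hne
  simp only [setOf_treatment_eq_and_observed_eq hcons, ← measureReal_def]
  have hsub : (⋂ j ∈ Finset.Icc 1 k, {ω | Y j ω = j}) ⊆ {ω | Y t₀ ω = t₀} ∩ {ω | Y t₁ ω = t₁} :=
    fun ω hω ↦ by
      simp only [Set.mem_iInter] at hω
      exact ⟨hω t₀ ht₀, hω t₁ ht₁⟩
  have hdisj : Disjoint {ω | X ω = t₀ ∧ Y t₀ ω = t₀} {ω | X ω = t₁ ∧ Y t₁ ω = t₁} :=
    Set.disjoint_left.2 fun ω h₀ h₁ ↦ hne (h₀.1.symm.trans h₁.1)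
  have hbound := measureReal_add_add_le_add_of_subset (μ := P) (B := {ω | Y t₁ ω = t₁})
    (F := {ω | X ω = t₁ ∧ Y t₁ ω = t₁}) (hY t₁ (measurableSet_singleton t₁))
    ((hX (measurableSet_singleton t₁)).inter (hY t₁ (measurableSet_singleton t₁)))
    hsub (fun _ h ↦ h.2) (fun _ h ↦ h.2) hdisj
  linarith

theorem pns_k_pairwise_upper_bound
    {Ω : Type*} [MeasurableSpace Ω] (P : Measure Ω) [IsProbabilityMeasure P]
    (n k : ℕ) (hk1 : 1 ≤ k) (hkn : k ≤ n)
    (X : Ω → ℕ) (Y : ℕ → Ω → ℕ) (Yobs : Ω → ℕ)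
    (hX : Measurable X) (hY : ∀ j, Measurable (Y j))
    (hXr : ∀ ω, X ω ∈ Finset.Icc 1 n)
    (hYr : ∀ j ω, Y j ω ∈ Finset.Icc 1 n)
    (hcons : ∀ ω, Yobs ω = Y (X ω) ω) :
    ∀ t₀ ∈ Finset.Icc 1 k, ∀ t₁ ∈ Finset.Icc 1 k, t₀ ≠ t₁ →
      (P (⋂ j ∈ Finset.Icc 1 k, {ω | Y j ω = j})).toReal ≤
        (P {ω | Y t₀ ω = t₀}).toReal + (P {ω | Y t₁ ω = t₁}).toReal - (P {ω | X ω = t₀ ∧ Yobs ω = t₀}).toReal - (P {ω | X ω = t₁ ∧ Yobs ω = t₁}).toReal :=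
  pns_k_pairwise_upper_bound_general P k X Y Yobs hX hY hcons
end

section
/- Equivalence classes of probabilities of causation, Case 1 (padding the outcome variable): fix integers 1 ≤ k ≤ m < n and data arrays e, o : {1,…,n} × {1,…,m} → ℝ. Let S_m be the set of real numbers of the form P(⋂_{j=1}^{k} {Y_j = j}) where the counterfactual model ranges over all probability spaces (Ω, 𝒜, P) with a measurable treatment X : Ω → {1,…,n} and measurable potential outcomes Y_j : Ω → {1,…,m} (j ∈ {1,…,n}), observed outcome Y(ω) = Y_{X(ω)}(ω), satisfying P(Y_j = i) = e(j,i) and P(X = j, Y = i) = o(j,i) for all j ∈ {1,…,n} and i ∈ {1,…,m}. Let S_n be the analogously defined set for models whose potential outcomes take values in {1,…,n}, subject to the additional constraints P(Y'_j = l) = 0 and P(X = j, Y' = l) = 0 for all j ∈ {1,…,n} and all l ∈ {m+1,…,n}, together with P(Y'_j = i) = e(j,i) and P(X = j, Y' = i) = o(j,i) for i ∈ {1,…,m}. Then S_n = S_m; consequently the tight bounds on P(⋂_{j=1}^{k} {Y'_j = j}) computed from the padded data coincide with those on P(⋂_{j=1}^{k} {Y_j = j}) computed from the original data. -/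
/-! Padding only adds outcome values of probability zero. Clamping every potential outcome to
`min (Y j) m` therefore changes it only on a null set, so all the constrained probabilities and
the target probability are preserved; conversely, an unpadded model is a padded one in which the
extra values never occur. -/

open MeasureTheory

section

variable {Ω : Type*} [MeasurableSpace Ω] {P : Measure Ω}

lemma ae_le_of_measure_eq_zero {f : Ω → ℕ} {m n : ℕ} (hf : ∀ ω, f ω ≤ n)
    (h : ∀ l ∈ Finset.Icc (m + 1) n, P {ω | f ω = l} = 0) : ∀ᵐ ω ∂P, f ω ≤ m := by
  have hne : ∀ᵐ ω ∂P, ∀ l ∈ Finset.Icc (m + 1) n, f ω ≠ l :=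
    (Filter.eventually_all_finset _).2 fun l hl => measure_eq_zero_iff_ae_notMem.1 (h l hl)
  filter_upwards [hne] with ω hω
  by_contra hlt
  exact hω (f ω) (Finset.mem_Icc.2 ⟨by omega, hf ω⟩) rfl

lemma measure_setOf_eq_eq_zero_of_le {f : Ω → ℕ} {m l : ℕ} (hf : ∀ ω, f ω ≤ m) (hl : m < l) :
    P {ω | f ω = l} = 0 := by
  convert measure_empty (μ := P)
  exact Set.eq_empty_of_forall_notMem fun ω hω => by
    have := hf ω
    simp only [Set.mem_ofPred_eq] at hω
    omega

lemma measure_congr_of_ae_iff {s t : Set Ω} (h : ∀ᵐ ω ∂P, ω ∈ s ↔ ω ∈ t) : P s = P t :=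
  measure_congr (Filter.eventuallyEq_set.2 h)

lemma ae_forall_min_eq_of_padding [IsFiniteMeasure P] {Y : ℕ → Ω → ℕ} {m n : ℕ}
    (hY : ∀ j ω, Y j ω ∈ Finset.Icc 1 n)
    (hpad : ∀ j ∈ Finset.Icc 1 n, ∀ l ∈ Finset.Icc (m + 1) n, (P {ω | Y j ω = l}).toReal = 0) :
    ∀ᵐ ω ∂P, ∀ j ∈ Finset.Icc 1 n, min (Y j ω) m = Y j ω := by
  refine (Filter.eventually_all_finset _).2 fun j hj => ?_
  have hle : ∀ᵐ ω ∂P, Y j ω ≤ m :=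
    ae_le_of_measure_eq_zero (fun ω => (Finset.mem_Icc.1 (hY j ω)).2)
      fun l hl => (measureReal_eq_zero_iff (measure_ne_top P _)).1 (hpad j hj l hl)
  exact hle.mono fun ω => min_eq_left

end

theorem equivalence_class_outcome_padding
    (n m k : ℕ) (hk1 : 1 ≤ k) (hkm : k ≤ m) (hmn : m < n)
    (e o : ℕ → ℕ → ℝ) :
    {r : ℝ | ∃ (Ω : Type) (_ : MeasurableSpace Ω) (P : Measure Ω)
        (_ : IsProbabilityMeasure P) (X : Ω → ℕ) (Y : ℕ → Ω → ℕ),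
      Measurable X ∧ (∀ j, Measurable (Y j)) ∧
      (∀ ω, X ω ∈ Finset.Icc 1 n) ∧
      (∀ j ω, Y j ω ∈ Finset.Icc 1 n) ∧
      (∀ j ∈ Finset.Icc 1 n, ∀ i ∈ Finset.Icc 1 m,
        (P {ω | Y j ω = i}).toReal = e j i) ∧
      (∀ j ∈ Finset.Icc 1 n, ∀ i ∈ Finset.Icc 1 m,
        (P {ω | X ω = j ∧ Y (X ω) ω = i}).toReal = o j i) ∧
      (∀ j ∈ Finset.Icc 1 n, ∀ l ∈ Finset.Icc (m+1) n,
        (P {ω | Y j ω = l}).toReal = 0) ∧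
      (∀ j ∈ Finset.Icc 1 n, ∀ l ∈ Finset.Icc (m+1) n,
        (P {ω | X ω = j ∧ Y (X ω) ω = l}).toReal = 0) ∧
      r = (P (⋂ j ∈ Finset.Icc 1 k, {ω | Y j ω = j})).toReal} =
    {r : ℝ | ∃ (Ω : Type) (_ : MeasurableSpace Ω) (P : Measure Ω)
        (_ : IsProbabilityMeasure P) (X : Ω → ℕ) (Y : ℕ → Ω → ℕ),
      Measurable X ∧ (∀ j, Measurable (Y j)) ∧
      (∀ ω, X ω ∈ Finset.Icc 1 n) ∧
      (∀ j ω, Y j ω ∈ Finset.Icc 1 m) ∧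
      (∀ j ∈ Finset.Icc 1 n, ∀ i ∈ Finset.Icc 1 m,
        (P {ω | Y j ω = i}).toReal = e j i) ∧
      (∀ j ∈ Finset.Icc 1 n, ∀ i ∈ Finset.Icc 1 m,
        (P {ω | X ω = j ∧ Y (X ω) ω = i}).toReal = o j i) ∧
      r = (P (⋂ j ∈ Finset.Icc 1 k, {ω | Y j ω = j})).toReal} := by
  ext r
  constructor
  · rintro ⟨Ω, mΩ, P, hP, X, Y, hX, hY, hXr, hYr, he, ho, hpad, -, rfl⟩
    have hae := ae_forall_min_eq_of_padding hYr hpad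
    refine ⟨Ω, mΩ, P, hP, X, fun j ω => min (Y j ω) m, hX, fun j => (hY j).min measurable_const,
      hXr, fun j ω => ?_, fun j hj i hi => ?_, fun j hj i hi => ?_, ?_⟩
    · exact Finset.mem_Icc.2
        ⟨le_min (Finset.mem_Icc.1 (hYr j ω)).1 (hk1.trans hkm), min_le_right _ _⟩
    · rw [← he j hj i hi]
      refine congrArg _ (measure_congr_of_ae_iff (hae.mono fun ω h => ?_))
      simp only [Set.mem_ofPred_eq, h j hj]
    · rw [← ho j hj i hi]
      refine congrArg _ (measure_congr_of_ae_iff (hae.mono fun ω h => ?_))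
      simp only [Set.mem_ofPred_eq, h (X ω) (hXr ω)]
    · refine congrArg _ (measure_congr_of_ae_iff (hae.mono fun ω h => ?_))
      simp only [Set.mem_iInter, Set.mem_ofPred_eq]
      refine forall₂_congr fun j hj => ?_
      obtain ⟨hj1, hjk⟩ := Finset.mem_Icc.1 hj
      rw [h j (Finset.mem_Icc.2 ⟨hj1, hjk.trans (hkm.trans hmn.le)⟩)]
  · rintro ⟨Ω, mΩ, P, hP, X, Y, hX, hY, hXr, hYr, he, ho, rfl⟩
    have hle : ∀ j ω, Y j ω ≤ m := fun j ω => (Finset.mem_Icc.1 (hYr j ω)).2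
    refine ⟨Ω, mΩ, P, hP, X, Y, hX, hY, hXr, fun j ω => ?_, he, ho, fun j _ l hl => ?_,
      fun j _ l hl => ?_, rfl⟩
    · exact Finset.Icc_subset_Icc_right hmn.le (hYr j ω)
    · simp [measure_setOf_eq_eq_zero_of_le (hle j) (Finset.mem_Icc.1 hl).1]
    · have hnull := measure_setOf_eq_eq_zero_of_le (P := P) (fun ω => hle (X ω) ω)
        (Finset.mem_Icc.1 hl).1
      have hjoint : P {ω | X ω = j ∧ Y (X ω) ω = l} = 0 := measure_mono_null (fun ω h => h.2) hnull
      simp [hjoint]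
end
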